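/- arXiv:1204.2777 — 5 statements merged into one kernel-verified Lean document; each statement's English description precedes it below -/
import Mathlib

section
/- For a 2x2 matrix A(v) depending smoothly on v in R^2, the linear degeneracy condition (Lie derivative of each eigenvalue along its eigenvector vanishes, for real distinct eigenvalues) is equivalent to the identity ∇(tr A) · A = ∇(det A), where ∇f denotes the row vector of partial derivatives of f with respect to v^1, v^2. -/
/-- Partial derivative of `f : ℝ² → ℝ` in the `i`-th coordinate direction. -/
noncomputable def pd (i : Fin 2) (f : (Fin 2 → ℝ) → ℝ) (x : Fin 2 → ℝ) : ℝ :=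
  fderiv ℝ f x (Pi.single i 1)

private lemma apply_eq_aux (L : (Fin 2 → ℝ) →L[ℝ] ℝ) (w : Fin 2 → ℝ) :
    L w = w 0 * L (Pi.single 0 1) + w 1 * L (Pi.single 1 1) := by
  have hw : w = w 0 • (Pi.single 0 1 : Fin 2 → ℝ) + w 1 • (Pi.single 1 1 : Fin 2 → ℝ) := by
    funext k; fin_cases k <;> simp
  conv_lhs => rw [hw]
  simp [map_add, map_smul, smul_eq_mul]


/-- For a smooth `2×2` matrix field `A(v)` with real distinct eigenvalues `λ⁰, λ¹`
and eigenvector fields `r⁰, r¹`, linear degeneracy (the Lie derivative of each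
eigenvalue along its own eigenvector vanishes) is equivalent to the identity
`∇(tr A) · A = ∇(det A)` of row vectors. -/
theorem linear_degeneracy_iff_trace_det
    (s : Set (Fin 2 → ℝ)) (hs : IsOpen s)
    (A : (Fin 2 → ℝ) → Matrix (Fin 2) (Fin 2) ℝ)
    (lam : Fin 2 → (Fin 2 → ℝ) → ℝ)
    (r : Fin 2 → (Fin 2 → ℝ) → (Fin 2 → ℝ))
    (hA : ∀ i j, ContDiffOn ℝ (⊤ : ℕ∞) (fun x => A x i j) s)
    (hlam : ∀ i, ContDiffOn ℝ (⊤ : ℕ∞) (lam i) s)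
    (heig : ∀ i, ∀ x ∈ s, (A x).mulVec (r i x) = lam i x • r i x)
    (hr : ∀ i, ∀ x ∈ s, r i x ≠ 0)
    (hdist : ∀ x ∈ s, lam 0 x ≠ lam 1 x) :
    (∀ i, ∀ x ∈ s, fderiv ℝ (lam i) x (r i x) = 0) ↔
    (∀ x ∈ s, ∀ j : Fin 2,
      ∑ k : Fin 2, pd k (fun y => Matrix.trace (A y)) x * A x k j
        = pd j (fun y => (A y).det) x) := by
  -- Step 1: Vieta.  On `s`, trace = λ₀+λ₁ and det = λ₀λ₁.
  have hroot : ∀ x ∈ s, ∀ i : Fin 2,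
      lam i x ^ 2 - Matrix.trace (A x) * lam i x + (A x).det = 0 := by
    intro x hx i
    have h0 : (A x - lam i x • 1).mulVec (r i x) = 0 := by
      rw [Matrix.sub_mulVec, heig i x hx, Matrix.smul_mulVec, Matrix.one_mulVec, sub_self]
    have hdet0 : (A x - lam i x • 1).det = 0 :=
      Matrix.exists_mulVec_eq_zero_iff.mp ⟨r i x, hr i x hx, h0⟩
    simp only [Matrix.det_fin_two, Matrix.trace_fin_two, Matrix.sub_apply, Matrix.smul_apply,
      Matrix.one_apply, smul_eq_mul] at hdet0 ⊢
    norm_num at hdet0 ⊢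
    linear_combination hdet0
  have htr : ∀ x ∈ s, Matrix.trace (A x) = lam 0 x + lam 1 x := by
    intro x hx
    have e0 := hroot x hx 0
    have e1 := hroot x hx 1
    have h : (lam 0 x - lam 1 x) * (lam 0 x + lam 1 x - Matrix.trace (A x)) = 0 := by
      linear_combination e0 - e1
    rcases mul_eq_zero.mp h with h | h
    · exact absurd (sub_eq_zero.mp h) (hdist x hx)
    · exact (sub_eq_zero.mp h).symm
  have hdet : ∀ x ∈ s, (A x).det = lam 0 x * lam 1 x := by
    intro x hx
    have e0 := hroot x hx 0
    have ht := htr x hx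
    linear_combination e0 + lam 0 x * ht
  -- Step 2: differentiability
  have hdiff : ∀ i (x : Fin 2 → ℝ), x ∈ s → DifferentiableAt ℝ (lam i) x := fun i x hx =>
    ((hlam i).differentiableOn (by simp)).differentiableAt (hs.mem_nhds hx)
  -- Step 3: derivatives of trace and det
  have hftr : ∀ x ∈ s, fderiv ℝ (fun y => Matrix.trace (A y)) x
      = fderiv ℝ (lam 0) x + fderiv ℝ (lam 1) x := by
    intro x hx
    have heq : (fun y => Matrix.trace (A y)) =ᶠ[nhds x] (fun y => lam 0 y + lam 1 y) :=
      Filter.eventuallyEq_of_mem (hs.mem_nhds hx) (fun y hy => htr y hy)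
    rw [heq.fderiv_eq, fderiv_fun_add (hdiff 0 x hx) (hdiff 1 x hx)]
  have hfdet : ∀ x ∈ s, fderiv ℝ (fun y => (A y).det) x
      = lam 0 x • fderiv ℝ (lam 1) x + lam 1 x • fderiv ℝ (lam 0) x := by
    intro x hx
    have heq : (fun y => (A y).det) =ᶠ[nhds x] (fun y => lam 0 y * lam 1 y) :=
      Filter.eventuallyEq_of_mem (hs.mem_nhds hx) (fun y hy => hdet y hy)
    rw [heq.fderiv_eq, fderiv_fun_mul (hdiff 0 x hx) (hdiff 1 x hx)]
  -- Step 4: the pointwise equivalence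
  have main : ∀ x ∈ s,
      ((∀ j : Fin 2, ∑ k : Fin 2, pd k (fun y => Matrix.trace (A y)) x * A x k j
          = pd j (fun y => (A y).det) x) ↔
        (∀ i : Fin 2, fderiv ℝ (lam i) x (r i x) = 0)) := by
    intro x hx
    set D0 : (Fin 2 → ℝ) →L[ℝ] ℝ := fderiv ℝ (lam 0) x with hD0
    set D1 : (Fin 2 → ℝ) →L[ℝ] ℝ := fderiv ℝ (lam 1) x with hD1
    set Lm : (Fin 2 → ℝ) →ₗ[ℝ] ℝ :=
      ((D0 : (Fin 2 → ℝ) →ₗ[ℝ] ℝ) + (D1 : (Fin 2 → ℝ) →ₗ[ℝ] ℝ)).comp (Matrix.mulVecLin (A x))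
        - (lam 0 x • (D1 : (Fin 2 → ℝ) →ₗ[ℝ] ℝ) + lam 1 x • (D0 : (Fin 2 → ℝ) →ₗ[ℝ] ℝ))
      with hLm
    have hLmapp : ∀ v, Lm v = D0 ((A x).mulVec v) + D1 ((A x).mulVec v)
        - (lam 0 x * D1 v + lam 1 x * D0 v) := by
      intro v
      simp [hLm, Matrix.mulVecLin_apply, smul_eq_mul]
    have hLm_single : ∀ j : Fin 2,
        Lm (Pi.single j 1)
          = (∑ k : Fin 2, pd k (fun y => Matrix.trace (A y)) x * A x k j)
            - pd j (fun y => (A y).det) x := by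
      intro j
      have hcol : (A x).mulVec (Pi.single j 1) = fun k => A x k j := by
        funext k; simp [Matrix.mulVec_single]
      have hpdtr : ∀ k : Fin 2, pd k (fun y => Matrix.trace (A y)) x
          = D0 (Pi.single k 1) + D1 (Pi.single k 1) := by
        intro k
        simp [pd, hftr x hx, hD0, hD1]
      have hpddet : pd j (fun y => (A y).det) x
          = lam 0 x * D1 (Pi.single j 1) + lam 1 x * D0 (Pi.single j 1) := by
        simp [pd, hfdet x hx, hD0, hD1, smul_eq_mul]
      rw [hLmapp, hcol, Fin.sum_univ_two, hpdtr 0, hpdtr 1, hpddet]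
      rw [apply_eq_aux D0 (fun k => A x k j), apply_eq_aux D1 (fun k => A x k j)]
      ring
    have hLm_r0 : Lm (r 0 x) = (lam 0 x - lam 1 x) * D0 (r 0 x) := by
      rw [hLmapp, heig 0 x hx]
      simp only [map_smul, smul_eq_mul]
      ring
    have hLm_r1 : Lm (r 1 x) = (lam 1 x - lam 0 x) * D1 (r 1 x) := by
      rw [hLmapp, heig 1 x hx]
      simp only [map_smul, smul_eq_mul]
      ring
    -- linear independence of the eigenvectors
    have hli : LinearIndependent ℝ ![r 0 x, r 1 x] := by
      rw [LinearIndependent.pair_iff]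
      intro a b hab
      have hA0 : (A x).mulVec (a • r 0 x + b • r 1 x) = 0 := by rw [hab, Matrix.mulVec_zero]
      rw [Matrix.mulVec_add, Matrix.mulVec_smul, Matrix.mulVec_smul, heig 0 x hx,
        heig 1 x hx] at hA0
      have h2 : (a * (lam 0 x - lam 1 x)) • r 0 x = 0 := by
        funext k
        have h0k := congrFun hA0 k
        have habk := congrFun hab k
        simp only [Pi.add_apply, Pi.smul_apply, smul_eq_mul, Pi.zero_apply] at h0k habk ⊢
        linear_combination h0k - lam 1 x * habk
      have ha : a = 0 := by
        rcases smul_eq_zero.mp h2 with h | h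
        · rcases mul_eq_zero.mp h with h | h
          · exact h
          · exact absurd (sub_eq_zero.mp h) (hdist x hx)
        · exact absurd h (hr 0 x hx)
      have hb : b = 0 := by
        rw [ha, zero_smul, zero_add] at hab
        rcases smul_eq_zero.mp hab with h | h
        · exact h
        · exact absurd h (hr 1 x hx)
      exact ⟨ha, hb⟩
    constructor
    · -- row identity → degeneracy
      intro h i
      have hLm0 : Lm = 0 := by
        apply (Pi.basisFun ℝ (Fin 2)).ext
        intro j
        have : (Pi.basisFun ℝ (Fin 2)) j = Pi.single j 1 := by
          simp [Pi.basisFun_apply]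
        simp only [LinearMap.zero_apply]
        rw [this, hLm_single j, sub_eq_zero]
        exact h j
      fin_cases i
      · have : Lm (r 0 x) = 0 := by rw [hLm0]; rfl
        rw [hLm_r0] at this
        rcases mul_eq_zero.mp this with h' | h'
        · exact absurd (sub_eq_zero.mp h') (hdist x hx)
        · exact h'
      · have : Lm (r 1 x) = 0 := by rw [hLm0]; rfl
        rw [hLm_r1] at this
        rcases mul_eq_zero.mp this with h' | h'
        · exact absurd (sub_eq_zero.mp h').symm (hdist x hx)
        · exact h'
    · -- degeneracy → row identity
      intro h j
      have hcard : Fintype.card (Fin 2) = Module.finrank ℝ (Fin 2 → ℝ) := by simp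
      have hLm0 : Lm = 0 := by
        apply (basisOfLinearIndependentOfCardEqFinrank hli hcard).ext
        intro i
        rw [coe_basisOfLinearIndependentOfCardEqFinrank]
        fin_cases i
        · show Lm (r 0 x) = 0
          rw [hLm_r0, h 0, mul_zero]
        · show Lm (r 1 x) = 0
          rw [hLm_r1, h 1, mul_zero]
      have := hLm_single j
      rw [hLm0] at this
      simp only [LinearMap.zero_apply] at this
      linarith [this]
  constructor
  · intro h x hx j
    exact (main x hx).mpr (fun i => h i x hx) j
  · intro h i x hx
    exact (main x hx).mp (h x hx) i
end

section
/- If smooth functions v(p^1,p^2) and w(p^1,p^2) satisfy the Hopf equations ∂₂v + v∂₁v = 0 and ∂₂w + w∂₁w = 0, then the coefficients f₁₁ = 1, f₁₂ = -(v+w)/2, f₂₂ = vw satisfy the linear degeneracy conditions 2∂₁(f₁₂/f₁₁) + ∂₂(ln(f₁₁/f₂₂)) = 0 and 2∂₂(f₁₂/f₂₂) + ∂₁(ln(f₂₂/f₁₁)) = 0. -/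
/-- If `v, w` satisfy the Hopf equations `∂₂v + v ∂₁v = 0`, `∂₂w + w ∂₁w = 0`, then
`f₁₁ = 1`, `f₁₂ = -(v+w)/2`, `f₂₂ = vw` satisfy the linear degeneracy conditions
`2∂₁(f₁₂/f₁₁) + ∂₂(ln(f₁₁/f₂₂)) = 0` and `2∂₂(f₁₂/f₂₂) + ∂₁(ln(f₂₂/f₁₁)) = 0`. -/
theorem hopf_implies_linear_degeneracy
    (s : Set (Fin 2 → ℝ)) (hs : IsOpen s)
    (v w : (Fin 2 → ℝ) → ℝ)
    (hv : ContDiffOn ℝ (⊤ : ℕ∞) v s) (hw : ContDiffOn ℝ (⊤ : ℕ∞) w s)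
    (hvw : ∀ x ∈ s, v x * w x ≠ 0) (hne : ∀ x ∈ s, v x ≠ w x)
    (hHopfv : ∀ x ∈ s, pd 1 v x + v x * pd 0 v x = 0)
    (hHopfw : ∀ x ∈ s, pd 1 w x + w x * pd 0 w x = 0) :
    ∀ x ∈ s,
      2 * pd 0 (fun y => (-(v y + w y) / 2) / 1) x
        + pd 1 (fun y => Real.log (1 / (v y * w y))) x = 0 ∧
      2 * pd 1 (fun y => (-(v y + w y) / 2) / (v y * w y)) x
        + pd 0 (fun y => Real.log ((v y * w y) / 1)) x = 0 := by
  intro x hx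
  have hxnb : s ∈ nhds x := hs.mem_nhds hx
  have hv' : HasFDerivAt v (fderiv ℝ v x) x :=
    ((hv.differentiableOn (by simp)).differentiableAt hxnb).hasFDerivAt
  have hw' : HasFDerivAt w (fderiv ℝ w x) x :=
    ((hw.differentiableOn (by simp)).differentiableAt hxnb).hasFDerivAt
  set dv := fderiv ℝ v x with hdv
  set dw := fderiv ℝ w x with hdw
  have hvwx : v x * w x ≠ 0 := hvw x hx
  have hvx : v x ≠ 0 := left_ne_zero_of_mul hvwx
  have hwx : w x ≠ 0 := right_ne_zero_of_mul hvwx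
  -- Hopf relations
  have hHv : dv (Pi.single 1 1) = -(v x * dv (Pi.single 0 1)) := by
    have := hHopfv x hx; simp only [pd, ← hdv] at this; linarith
  have hHw : dw (Pi.single 1 1) = -(w x * dw (Pi.single 0 1)) := by
    have := hHopfw x hx; simp only [pd, ← hdw] at this; linarith
  -- derivative of the product v*w
  have hmul : HasFDerivAt (fun y => v y * w y) (v x • dw + w x • dv) x := hv'.mul hw'
  -- derivative of (v*w)⁻¹
  have hinv : HasFDerivAt (fun y => (v y * w y)⁻¹)
      ((-((v x * w x) ^ 2)⁻¹) • (v x • dw + w x • dv)) x :=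
    (hasDerivAt_inv hvwx).comp_hasFDerivAt x hmul
  -- Function A
  have hAeq : (fun y => (-(v y + w y) / 2) / 1) = (fun y => (-2⁻¹ : ℝ) * (v y + w y)) := by
    funext y; ring
  have hA : HasFDerivAt (fun y => (-2⁻¹ : ℝ) * (v y + w y)) ((-2⁻¹ : ℝ) • (dv + dw)) x :=
    (hv'.add hw').const_mul _
  -- Function B
  have hBeq : (fun y => Real.log (1 / (v y * w y))) = (fun y => -Real.log (v y * w y)) := by
    funext y; rw [one_div, Real.log_inv]
  have hB : HasFDerivAt (fun y => -Real.log (v y * w y))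
      (-((v x * w x)⁻¹ • (v x • dw + w x • dv))) x := (hmul.log hvwx).neg
  -- Function C
  have hCeq : (fun y => (-(v y + w y) / 2) / (v y * w y))
      = (fun y => (-2⁻¹ : ℝ) * ((v y + w y) * (v y * w y)⁻¹)) := by
    funext y; ring
  have hC : HasFDerivAt (fun y => (-2⁻¹ : ℝ) * ((v y + w y) * (v y * w y)⁻¹))
      ((-2⁻¹ : ℝ) • ((v x + w x) • ((-((v x * w x) ^ 2)⁻¹) • (v x • dw + w x • dv))
        + (v x * w x)⁻¹ • (dv + dw))) x :=
    ((hv'.add hw').mul hinv).const_mul _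
  -- Function D
  have hDeq : (fun y => Real.log ((v y * w y) / 1)) = (fun y => Real.log (v y * w y)) := by
    funext y; rw [div_one]
  have hD : HasFDerivAt (fun y => Real.log (v y * w y))
      ((v x * w x)⁻¹ • (v x • dw + w x • dv)) x := hmul.log hvwx
  simp only [pd, hAeq, hBeq, hCeq, hDeq, hA.fderiv, hB.fderiv, hC.fderiv, hD.fderiv,
    ContinuousLinearMap.add_apply, ContinuousLinearMap.coe_smul', Pi.smul_apply,
    ContinuousLinearMap.neg_apply, smul_eq_mul]
  set a0 := dv (Pi.single 0 1)
  set b0 := dw (Pi.single 0 1)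
  rw [hHv, hHw]
  constructor
  · field_simp
    ring
  · field_simp
    ring
end

section
/- Elimination of the covector φ from the 2D tensorial linear degeneracy relations ∂₁f₁₁ = φ₁f₁₁, ∂₂f₂₂ = φ₂f₂₂, ∂₂f₁₁ + 2∂₁f₁₂ = φ₂f₁₁ + 2φ₁f₁₂, ∂₁f₂₂ + 2∂₂f₁₂ = φ₁f₂₂ + 2φ₂f₁₂ yields exactly the conditions 2∂₁(f₁₂/f₁₁) + ∂₂(ln(f₁₁/f₂₂)) = 0 and 2∂₂(f₁₂/f₂₂) + ∂₁(ln(f₂₂/f₁₁)) = 0; that is, for smooth nonvanishing f₁₁, f₂₂ and smooth f₁₂, there exists a covector (φ₁, φ₂) satisfying the four relations if and only if the two latter conditions hold. -/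
lemma pd_mul (f g : (Fin 2 → ℝ) → ℝ) (i : Fin 2) (x : Fin 2 → ℝ)
    (hf : DifferentiableAt ℝ f x) (hg : DifferentiableAt ℝ g x) :
    pd i (fun y => f y * g y) x = pd i f x * g x + f x * pd i g x := by
  have h : fderiv ℝ (fun y => f y * g y) x = _ := (hf.hasFDerivAt.mul hg.hasFDerivAt).fderiv
  simp only [pd, h, ContinuousLinearMap.add_apply, ContinuousLinearMap.coe_smul',
    Pi.smul_apply, smul_eq_mul]
  ring

lemma pd_inv (g : (Fin 2 → ℝ) → ℝ) (i : Fin 2) (x : Fin 2 → ℝ)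
    (hg : DifferentiableAt ℝ g x) (hg0 : g x ≠ 0) :
    pd i (fun y => (g y)⁻¹) x = - pd i g x / g x ^ 2 := by
  have h := ((hasFDerivAt_inv' (𝕜 := ℝ) hg0).comp x hg.hasFDerivAt).fderiv
  have e : (fun y => (g y)⁻¹) = Inv.inv ∘ g := rfl
  rw [pd, e, h]
  simp only [ContinuousLinearMap.coe_comp', Function.comp_apply,
    ContinuousLinearMap.neg_apply, ContinuousLinearMap.mulLeftRight_apply, pd]
  field_simp

lemma pd_div (f g : (Fin 2 → ℝ) → ℝ) (i : Fin 2) (x : Fin 2 → ℝ)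
    (hf : DifferentiableAt ℝ f x) (hg : DifferentiableAt ℝ g x) (hg0 : g x ≠ 0) :
    pd i (fun y => f y / g y) x = (pd i f x * g x - f x * pd i g x) / g x ^ 2 := by
  simp only [div_eq_mul_inv]
  rw [pd_mul f (fun y => (g y)⁻¹) i x hf (hg.inv hg0), pd_inv g i x hg hg0]
  field_simp
  ring

lemma pd_log (f : (Fin 2 → ℝ) → ℝ) (i : Fin 2) (x : Fin 2 → ℝ)
    (hf : DifferentiableAt ℝ f x) (hf0 : f x ≠ 0) :
    pd i (fun y => Real.log (f y)) x = pd i f x / f x := by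
  have h := (hf.hasFDerivAt.log hf0).fderiv
  simp only [pd, h, ContinuousLinearMap.coe_smul', Pi.smul_apply, smul_eq_mul]
  rw [div_eq_inv_mul]

/-- For smooth `f₁₁, f₂₂` nowhere zero and smooth `f₁₂`, there exists a covector
`(φ₁, φ₂)` satisfying the 2D tensorial linear degeneracy relations
`∂₁f₁₁ = φ₁f₁₁`, `∂₂f₂₂ = φ₂f₂₂`, `∂₂f₁₁ + 2∂₁f₁₂ = φ₂f₁₁ + 2φ₁f₁₂`,
`∂₁f₂₂ + 2∂₂f₁₂ = φ₁f₂₂ + 2φ₂f₁₂` if and only if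
`2∂₁(f₁₂/f₁₁) + ∂₂(ln(f₁₁/f₂₂)) = 0` and `2∂₂(f₁₂/f₂₂) + ∂₁(ln(f₂₂/f₁₁)) = 0`. -/
theorem covector_elimination_iff
    (s : Set (Fin 2 → ℝ)) (hs : IsOpen s)
    (f11 f12 f22 : (Fin 2 → ℝ) → ℝ)
    (h11 : ContDiffOn ℝ (⊤ : ℕ∞) f11 s) (h12 : ContDiffOn ℝ (⊤ : ℕ∞) f12 s)
    (h22 : ContDiffOn ℝ (⊤ : ℕ∞) f22 s)
    (hn11 : ∀ x ∈ s, f11 x ≠ 0) (hn22 : ∀ x ∈ s, f22 x ≠ 0) :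
    (∃ φ₁ φ₂ : (Fin 2 → ℝ) → ℝ, ∀ x ∈ s,
        pd 0 f11 x = φ₁ x * f11 x ∧
        pd 1 f22 x = φ₂ x * f22 x ∧
        pd 1 f11 x + 2 * pd 0 f12 x = φ₂ x * f11 x + 2 * φ₁ x * f12 x ∧
        pd 0 f22 x + 2 * pd 1 f12 x = φ₁ x * f22 x + 2 * φ₂ x * f12 x) ↔
    (∀ x ∈ s,
        2 * pd 0 (fun y => f12 y / f11 y) x
          + pd 1 (fun y => Real.log (f11 y / f22 y)) x = 0 ∧
        2 * pd 1 (fun y => f12 y / f22 y) x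
          + pd 0 (fun y => Real.log (f22 y / f11 y)) x = 0) := by
  have hd : ∀ (f : (Fin 2 → ℝ) → ℝ), ContDiffOn ℝ (⊤ : ℕ∞) f s → ∀ x ∈ s, DifferentiableAt ℝ f x :=
    fun f hf x hx => (hf.contDiffAt (hs.mem_nhds hx)).differentiableAt (by simp)
  have key : ∀ x ∈ s,
      (2 * pd 0 (fun y => f12 y / f11 y) x
          + pd 1 (fun y => Real.log (f11 y / f22 y)) x
        = 2 * (pd 0 f12 x * f11 x - f12 x * pd 0 f11 x) / f11 x ^ 2
            + (pd 1 f11 x / f11 x - pd 1 f22 x / f22 x)) ∧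
      (2 * pd 1 (fun y => f12 y / f22 y) x
          + pd 0 (fun y => Real.log (f22 y / f11 y)) x
        = 2 * (pd 1 f12 x * f22 x - f12 x * pd 1 f22 x) / f22 x ^ 2
            + (pd 0 f22 x / f22 x - pd 0 f11 x / f11 x)) := by
    intro x hx
    have d11 := hd f11 h11 x hx
    have d12 := hd f12 h12 x hx
    have d22 := hd f22 h22 x hx
    have n11 := hn11 x hx
    have n22 := hn22 x hx
    have hq1 : DifferentiableAt ℝ (fun y => f11 y / f22 y) x := by
      simp only [div_eq_mul_inv]; exact d11.mul (d22.inv n22)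
    have hq2 : DifferentiableAt ℝ (fun y => f22 y / f11 y) x := by
      simp only [div_eq_mul_inv]; exact d22.mul (d11.inv n11)
    have l1 : pd 1 (fun y => Real.log (f11 y / f22 y)) x
        = pd 1 f11 x / f11 x - pd 1 f22 x / f22 x := by
      rw [pd_log _ _ _ hq1 (div_ne_zero n11 n22), pd_div _ _ _ _ d11 d22 n22]
      field_simp
    have l2 : pd 0 (fun y => Real.log (f22 y / f11 y)) x
        = pd 0 f22 x / f22 x - pd 0 f11 x / f11 x := by
      rw [pd_log _ _ _ hq2 (div_ne_zero n22 n11), pd_div _ _ _ _ d22 d11 n11]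
      field_simp
    rw [pd_div _ _ _ _ d12 d11 n11, pd_div _ _ _ _ d12 d22 n22, l1, l2]
    constructor <;> ring
  constructor
  · rintro ⟨φ₁, φ₂, h⟩ x hx
    obtain ⟨e1, e2, e3, e4⟩ := h x hx
    obtain ⟨k1, k2⟩ := key x hx
    have n11 := hn11 x hx
    have n22 := hn22 x hx
    have hφ1 : φ₁ x = pd 0 f11 x / f11 x := by field_simp; linarith [e1]
    have hφ2 : φ₂ x = pd 1 f22 x / f22 x := by field_simp; linarith [e2]
    rw [hφ1, hφ2] at e3 e4
    constructor
    · rw [k1]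
      field_simp at e3 ⊢
      linear_combination e3
    · rw [k2]
      field_simp at e4 ⊢
      linear_combination e4
  · intro h
    refine ⟨fun x => pd 0 f11 x / f11 x, fun x => pd 1 f22 x / f22 x, fun x hx => ?_⟩
    obtain ⟨c1, c2⟩ := h x hx
    obtain ⟨k1, k2⟩ := key x hx
    rw [k1] at c1
    rw [k2] at c2
    have n11 := hn11 x hx
    have n22 := hn22 x hx
    field_simp at c1 c2
    refine ⟨by field_simp, by field_simp, ?_, ?_⟩
    · have h0 : f11 x * ((pd 1 f11 x + 2 * pd 0 f12 x) * (f22 x * f11 x)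
          - (pd 1 f22 x * f11 x * f11 x + 2 * pd 0 f11 x * f12 x * f22 x)) = 0 := by
        linear_combination f11 x * c1
      have h1 := (mul_eq_zero.mp h0).resolve_left n11
      field_simp
      linear_combination h1
    · have h0 : f22 x * ((pd 0 f22 x + 2 * pd 1 f12 x) * (f11 x * f22 x)
          - (pd 0 f11 x * f22 x * f22 x + 2 * pd 1 f22 x * f12 x * f11 x)) = 0 := by
        linear_combination f22 x * c2
      have h1 := (mul_eq_zero.mp h0).resolve_left n22
      field_simp
      linear_combination h1
end

section
/- If v, w are defined implicitly by f(v) = v u_x − u_t and g(w) = w u_x − u_t for smooth functions f, g with f'(v) ≠ u_x and g'(w) ≠ u_x, and u satisfies u_tt − (v+w)u_tx + v w u_xx = 0, then v and w satisfy the linearly degenerate system v_t = w v_x and w_t = v w_x. -/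
lemma pd_pd_eq (u : (Fin 2 → ℝ) → ℝ) (z : Fin 2 → ℝ)
    (hd : DifferentiableAt ℝ (fderiv ℝ u) z) (i j : Fin 2) :
    pd i (pd j u) z = fderiv ℝ (fderiv ℝ u) z (Pi.single i 1) (Pi.single j 1) := by
  unfold pd
  rw [fderiv_clm_apply hd (differentiableAt_const _)]
  simp

/-- The differentiated implicit relation. -/
lemma aux_diff (s : Set (Fin 2 → ℝ)) (hs : IsOpen s)
    (u v : (Fin 2 → ℝ) → ℝ) (f : ℝ → ℝ)
    (hu : ContDiffOn ℝ 2 u s) (hv : ContDiffOn ℝ 1 v s) (hf : ContDiff ℝ (⊤ : ℕ∞) f)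
    (hfv : ∀ z ∈ s, f (v z) = v z * pd 1 u z - pd 0 u z)
    (z : Fin 2 → ℝ) (hz : z ∈ s) (i : Fin 2) :
    (deriv f (v z) - pd 1 u z) * pd i v z
      = v z * pd i (pd 1 u) z - pd i (pd 0 u) z := by
  have hzs : s ∈ nhds z := hs.mem_nhds hz
  have hvz : DifferentiableAt ℝ v z :=
    ((hv.differentiableOn one_ne_zero) z hz).differentiableAt hzs
  have hud : ContDiffAt ℝ 1 (fderiv ℝ u) z :=
    ((hu.contDiffAt hzs).fderiv_right (m := 1) (by norm_num))
  have hudz : DifferentiableAt ℝ (fderiv ℝ u) z := hud.differentiableAt one_ne_zero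
  have hU1 : DifferentiableAt ℝ (pd 1 u) z := by
    unfold pd; exact hudz.clm_apply (differentiableAt_const _)
  have hU0 : DifferentiableAt ℝ (pd 0 u) z := by
    unfold pd; exact hudz.clm_apply (differentiableAt_const _)
  have hfd : DifferentiableAt ℝ f (v z) := hf.differentiable (by simp) _
  have heq : fderiv ℝ (fun y => f (v y)) z
      = fderiv ℝ (fun y => v y * pd 1 u y - pd 0 u y) z := by
    apply Filter.EventuallyEq.fderiv_eq
    filter_upwards [hzs] with y hy using hfv y hy
  have hL : fderiv ℝ (fun y => f (v y)) z (Pi.single i 1)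
      = deriv f (v z) * pd i v z := by
    have := fderiv_comp z hfd hvz
    rw [show (fun y => f (v y)) = f ∘ v from rfl, this]
    simp only [ContinuousLinearMap.comp_apply]
    rw [show fderiv ℝ v z (Pi.single i 1) = pd i v z from rfl,
      show (pd i v z : ℝ) = pd i v z • (1:ℝ) by simp, map_smul, fderiv_apply_one_eq_deriv]
    simp [mul_comm]
  have hR : fderiv ℝ (fun y => v y * pd 1 u y - pd 0 u y) z (Pi.single i 1)
      = pd i v z * pd 1 u z + v z * pd i (pd 1 u) z - pd i (pd 0 u) z := by
    rw [fderiv_fun_sub (f := fun y => v y * pd 1 u y) (hvz.mul hU1) hU0, fderiv_fun_mul hvz hU1]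
    simp only [ContinuousLinearMap.sub_apply, ContinuousLinearMap.add_apply,
      ContinuousLinearMap.smul_apply, smul_eq_mul]
    rw [show fderiv ℝ v z (Pi.single i 1) = pd i v z from rfl]
    ring_nf
    rfl
  have := hL.symm.trans ((congrFun (congrArg _ heq) (Pi.single i 1)).trans hR)
  ring_nf
  ring_nf at this
  linarith [this]

/-- If `v, w` are defined implicitly by `f(v) = v u_x − u_t`, `g(w) = w u_x − u_t` with
`f'(v) ≠ u_x`, `g'(w) ≠ u_x`, `v ≠ w`, and `u` satisfies
`u_tt − (v+w)u_tx + vw u_xx = 0`, then `v_t = w v_x` and `w_t = v w_x`. -/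
theorem implicit_pair_satisfies_linearly_degenerate_system
    (s : Set (Fin 2 → ℝ)) (hs : IsOpen s)
    (u v w : (Fin 2 → ℝ) → ℝ) (f g : ℝ → ℝ)
    (hu : ContDiffOn ℝ 2 u s)
    (hv : ContDiffOn ℝ 1 v s) (hw : ContDiffOn ℝ 1 w s)
    (hf : ContDiff ℝ (⊤ : ℕ∞) f) (hg : ContDiff ℝ (⊤ : ℕ∞) g)
    (hfv : ∀ z ∈ s, f (v z) = v z * pd 1 u z - pd 0 u z)
    (hgw : ∀ z ∈ s, g (w z) = w z * pd 1 u z - pd 0 u z)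
    (hnd1 : ∀ z ∈ s, deriv f (v z) ≠ pd 1 u z)
    (hnd2 : ∀ z ∈ s, deriv g (w z) ≠ pd 1 u z)
    (hne : ∀ z ∈ s, v z ≠ w z)
    (hPDE : ∀ z ∈ s,
      pd 0 (pd 0 u) z - (v z + w z) * pd 1 (pd 0 u) z
        + v z * w z * pd 1 (pd 1 u) z = 0) :
    ∀ z ∈ s, pd 0 v z = w z * pd 1 v z ∧ pd 0 w z = v z * pd 1 w z := by
  intro z hz
  have hzs : s ∈ nhds z := hs.mem_nhds hz
  have hudz : DifferentiableAt ℝ (fderiv ℝ u) z :=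
    (((hu.contDiffAt hzs).fderiv_right (m := 1) (by norm_num))).differentiableAt one_ne_zero
  have hsym : pd 0 (pd 1 u) z = pd 1 (pd 0 u) z := by
    rw [pd_pd_eq u z hudz, pd_pd_eq u z hudz]
    exact ((hu.contDiffAt hzs).isSymmSndFDerivAt (by simp)) _ _
  have hv0 := aux_diff s hs u v f hu hv hf hfv z hz 0
  have hv1 := aux_diff s hs u v f hu hv hf hfv z hz 1
  have hw0 := aux_diff s hs u w g hu hw hg hgw z hz 0
  have hw1 := aux_diff s hs u w g hu hw hg hgw z hz 1
  rw [hsym] at hv0 hw0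
  have hP := hPDE z hz
  have h1 : deriv f (v z) - pd 1 u z ≠ 0 := sub_ne_zero.mpr (hnd1 z hz)
  have h2 : deriv g (w z) - pd 1 u z ≠ 0 := sub_ne_zero.mpr (hnd2 z hz)
  constructor
  · have key : (deriv f (v z) - pd 1 u z) * (pd 0 v z - w z * pd 1 v z) = 0 := by
      have : (deriv f (v z) - pd 1 u z) * (pd 0 v z - w z * pd 1 v z)
          = (deriv f (v z) - pd 1 u z) * pd 0 v z
            - w z * ((deriv f (v z) - pd 1 u z) * pd 1 v z) := by ring
      rw [this, hv0, hv1]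
      linarith [hP]
    rcases mul_eq_zero.mp key with h | h
    · exact absurd h h1
    · linarith [sub_eq_zero.mp h]
  · have key : (deriv g (w z) - pd 1 u z) * (pd 0 w z - v z * pd 1 w z) = 0 := by
      have : (deriv g (w z) - pd 1 u z) * (pd 0 w z - v z * pd 1 w z)
          = (deriv g (w z) - pd 1 u z) * pd 0 w z
            - v z * ((deriv g (w z) - pd 1 u z) * pd 1 w z) := by ring
      rw [this, hw0, hw1]
      nlinarith [hP]
    rcases mul_eq_zero.mp key with h | h
    · exact absurd h h2
    · linarith [sub_eq_zero.mp h]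
end

section
/- Given C¹ functions v, w with v ≠ w satisfying v_t = w v_x and w_t = v w_x, and smooth functions f, g, the conservation law identity holds: ∂_t((f(v)−g(w))/(v−w)) = ∂_x((w f(v) − v g(w))/(v−w)). -/
/-!
Expand both sides by the quotient, product and chain rules and replace `v_t`, `w_t` by
`w v_x`, `v w_x`. Both sides then have denominator `(v - w)²`, and the numerators agree
identically as polynomials in `v, w, f(v), g(w), f'(v), g'(w), v_x, w_x`.
-/

section PartialDerivative

variable (i : Fin 2) {F G : (Fin 2 → ℝ) → ℝ} {z : Fin 2 → ℝ}

lemma pd_comp {φ : ℝ → ℝ} (hφ : DifferentiableAt ℝ φ (F z))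
    (hF : DifferentiableAt ℝ F z) :
    pd i (fun y => φ (F y)) z = deriv φ (F z) * pd i F z := by
  change fderiv ℝ (φ ∘ F) z _ = _
  simp [(hφ.hasDerivAt.comp_hasFDerivAt z hF.hasFDerivAt).fderiv, pd]

lemma pd_sub (hF : DifferentiableAt ℝ F z) (hG : DifferentiableAt ℝ G z) :
    pd i (fun y => F y - G y) z = pd i F z - pd i G z := by
  simp [pd, fderiv_fun_sub hF hG]

lemma pd_mul_s7 (hF : DifferentiableAt ℝ F z) (hG : DifferentiableAt ℝ G z) :
    pd i (fun y => F y * G y) z = pd i F z * G z + F z * pd i G z := by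
  simp [pd, fderiv_fun_mul hF hG]
  ring

lemma pd_div_s7 (hF : DifferentiableAt ℝ F z) (hG : DifferentiableAt ℝ G z) (hGz : G z ≠ 0) :
    pd i (fun y => F y / G y) z = (pd i F z * G z - F z * pd i G z) / G z ^ 2 := by
  simp only [div_eq_mul_inv]
  rw [pd_mul_s7 i (G := fun y => (G y)⁻¹) hF (hG.inv hGz),
    pd_comp i (differentiableAt_inv hGz) hG, deriv_inv]
  field_simp
  ring

end PartialDerivative

/-- For C¹ functions `v ≠ w` satisfying `v_t = w v_x`, `w_t = v w_x`, and C¹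
functions `f, g` of one variable, the conservation law
`∂_t((f(v)−g(w))/(v−w)) = ∂_x((w f(v) − v g(w))/(v−w))` holds. -/
theorem conservation_law
    (s : Set (Fin 2 → ℝ)) (hs : IsOpen s)
    (v w : (Fin 2 → ℝ) → ℝ) (f g : ℝ → ℝ)
    (hv : ContDiffOn ℝ 1 v s) (hw : ContDiffOn ℝ 1 w s)
    (hf : ContDiff ℝ 1 f) (hg : ContDiff ℝ 1 g)
    (hne : ∀ z ∈ s, v z ≠ w z)
    (h1 : ∀ z ∈ s, pd 0 v z = w z * pd 1 v z)
    (h2 : ∀ z ∈ s, pd 0 w z = v z * pd 1 w z) :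
    ∀ z ∈ s,
      pd 0 (fun y => (f (v y) - g (w y)) / (v y - w y)) z
        = pd 1 (fun y => (w y * f (v y) - v y * g (w y)) / (v y - w y)) z := by
  intro z hz
  have hvz : DifferentiableAt ℝ v z :=
    (hv.contDiffAt (hs.mem_nhds hz)).differentiableAt one_ne_zero
  have hwz : DifferentiableAt ℝ w z :=
    (hw.contDiffAt (hs.mem_nhds hz)).differentiableAt one_ne_zero
  have hfd : Differentiable ℝ f := hf.differentiable one_ne_zero
  have hgd : Differentiable ℝ g := hg.differentiable one_ne_zero
  have hvw : v z - w z ≠ 0 := sub_ne_zero.mpr (hne z hz)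
  simp (disch := first | fun_prop | exact hvw) only [pd_div_s7, pd_sub, pd_mul_s7, pd_comp]
  rw [h1 z hz, h2 z hz]
  ring
end
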